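/- (Form-valued equivariant forms vanish under ᴱd on the Lie kernel.) Let (A, L, ρ) be a Lie–Rinehart algebra over ℝ with a connection ∇, let k ≥ 0, and let Ω^k denote the A-module of alternating A-multilinear maps Der_ℝ(A)^k → A, on which each X ∈ Der_ℝ(A) acts by the Lie derivative (L_X β)(X₁,…,X_k) = X(β(X₁,…,X_k)) − Σ_{i=1}^k β(X₁,…,⁅X,X_i⁆,…,X_k). Let α : L^m → Ω^k be an alternating A-multilinear map which is equivariant, i.e., L_{ρ(e)}(α(e₁,…,e_m)) − Σ_{i=1}^m α(e₁,…,∇_{ρ(e)}e_i,…,e_m) = Σ_{i=1}^m (−1)^{i−1} α([e,e_i]^∇, e₁,…,ê_i,…,e_m) for all e, e_i ∈ L. If e₁,…,e_{m+1} ∈ L satisfy Σ_{i<j} (−1)^{i+j} [e_i,e_j]^∇ ∧ e₁ ∧ … ∧ ê_i ∧ … ∧ ê_j ∧ … ∧ e_{m+1} = 0 in the m-th exterior power of the A-module L, then (ᴱdα)(e₁,…,e_{m+1}) = 0 in Ω^k, where (ᴱdα)(e₁,…,e_{m+1}) = Σ_i (−1)^{i−1} L_{ρ(e_i)}(α(e₁,…,ê_i,…,e_{m+1}))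 + Σ_{i<j} (−1)^{i+j} α(⁅e_i,e_j⁆, e₁,…,ê_i,…,ê_j,…,e_{m+1}). -/
import Mathlib


open scoped BigOperators

/-- The tuple obtained from `e : Fin (m+1) → L` by inserting `b` in front and
omitting the entries at positions `i` and `j` (intended for `i < j`). -/
def omit2cons {L : Type*} {m : ℕ} (b : L) (e : Fin (m + 1) → L) (i j : Fin (m + 1)) :
    Fin m → L := fun k =>
  if (k : ℕ) = 0 then b
  else e ⟨if (k : ℕ) - 1 < (i : ℕ) then (k : ℕ) - 1
          else if (k : ℕ) < (j : ℕ) then (k : ℕ) else (k : ℕ) + 1,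
        by have := k.isLt; split_ifs <;> omega⟩

/-- The tuple obtained from `f : Fin m → L` by inserting `b` in front and omitting
the entry at position `i`. -/
def consOmit1 {L : Type*} {m : ℕ} (b : L) (f : Fin m → L) (i : Fin m) : Fin m → L := fun k =>
  if (k : ℕ) = 0 then b
  else f ⟨if (k : ℕ) - 1 < (i : ℕ) then (k : ℕ) - 1 else (k : ℕ),
        by have := k.isLt; split_ifs <;> omega⟩

/-- The induced connection on `A`-valued `m`-forms on `L`:
`(∇_X α)(e₁,…,e_m) = X(α(e₁,…,e_m)) − Σᵢ α(e₁,…,∇_X eᵢ,…,e_m)`. -/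
def connForm {A : Type*} [CommRing A] [Algebra ℝ A]
    {L : Type*} [LieRing L] [LieAlgebra ℝ L] [Module A L]
    (D : Derivation ℝ A A → L → L) {m : ℕ}
    (X : Derivation ℝ A A) (α : (Fin m → L) → A) (f : Fin m → L) : A :=
  X (α f) - ∑ i : Fin m, α (Function.update f i (D X (f i)))

/-- The covariantized bracket `[e₁,e₂]^∇ = ⁅e₁,e₂⁆ − ∇_{ρ(e₁)}e₂ + ∇_{ρ(e₂)}e₁`. -/
def covBracket {A : Type*} [CommRing A] [Algebra ℝ A]
    {L : Type*} [LieRing L] [LieAlgebra ℝ L] [Module A L]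
    (ρ : L →ₗ[A] Derivation ℝ A A) (D : Derivation ℝ A A → L → L) (e₁ e₂ : L) : L :=
  ⁅e₁, e₂⁆ - D (ρ e₁) e₂ + D (ρ e₂) e₁

/-- The Lie derivative of a raw `k`-form on the derivations of `A` along a derivation `X`:
`(L_X β)(X₁,…,X_k) = X(β(X₁,…,X_k)) − Σᵢ β(X₁,…,⁅X,Xᵢ⁆,…,X_k)`. -/
def lieDer {A : Type*} [CommRing A] [Algebra ℝ A] {k : ℕ} (X : Derivation ℝ A A)
    (β : (Fin k → Derivation ℝ A A) → A) (Y : Fin k → Derivation ℝ A A) : A :=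
  X (β Y) - ∑ i : Fin k, β (Function.update Y i ⁅X, Y i⁆)

section auxlemmas
variable {L : Type*}

lemma succAbove_coe {m : ℕ} (i : Fin (m+1)) (l : Fin m) :
    ((i.succAbove l : Fin (m+1)) : ℕ) = if (l:ℕ) < (i:ℕ) then (l:ℕ) else (l:ℕ)+1 := by
  rcases lt_or_ge ((l:ℕ)) ((i:ℕ)) with h | h
  · rw [Fin.succAbove_of_castSucc_lt _ _ (by simpa [Fin.lt_def] using h), if_pos h]; rfl
  · rw [Fin.succAbove_of_le_castSucc _ _ (by simpa [Fin.le_def] using h), if_neg (not_lt.2 h)]; rfl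

lemma consOmit1_comp {m : ℕ} (b : L) (e : Fin (m+1) → L) (i : Fin (m+1)) (l : Fin m) :
    consOmit1 b (e ∘ i.succAbove) l =
      if h : (l:ℕ) < (i:ℕ) then omit2cons b e ⟨(l:ℕ), by omega⟩ i
      else omit2cons b e i ⟨(l:ℕ)+1, by have := l.isLt; omega⟩ := by
  funext k
  by_cases hk : (k:ℕ) = 0
  · split_ifs <;> simp [consOmit1, omit2cons, hk]
  · have hki := k.isLt
    have hli := l.isLt
    split_ifs with h
    · simp only [consOmit1, omit2cons, hk, if_neg hk, Function.comp_apply]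
      refine congrArg e ?_
      rw [Fin.ext_iff, succAbove_coe]
      simp only [Fin.val_mk]
      split_ifs <;> omega
    · simp only [consOmit1, omit2cons, hk, if_neg hk, Function.comp_apply]
      refine congrArg e ?_
      rw [Fin.ext_iff, succAbove_coe]
      simp only [Fin.val_mk]
      split_ifs <;> omega

lemma update_eq_consOmit1 {m : ℕ} (f : Fin m → L) (l : Fin m) (b : L) :
    Function.update f l b = consOmit1 b f l ∘ l.cycleRange := by
  obtain ⟨m, rfl⟩ : ∃ m', m = m'+1 := ⟨m-1, by have := l.pos; omega⟩
  funext t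
  rcases lt_trichotomy t l with h | h | h
  · rw [Function.update_of_ne (ne_of_lt h)]
    have hv : ((l.cycleRange t : Fin (m+1)) : ℕ) = (t:ℕ)+1 := Fin.coe_cycleRange_of_lt h
    simp only [Function.comp_apply, consOmit1, hv]
    rw [if_neg (by omega)]
    have htl : (t:ℕ) < (l:ℕ) := h
    congr 1
    rw [Fin.ext_iff]
    simp only [Fin.val_mk]
    split_ifs <;> omega
  · subst h
    rw [Function.update_self]
    simp [consOmit1, Fin.cycleRange_self]
  · rw [Function.update_of_ne (ne_of_gt h)]
    have hv : l.cycleRange t = t := Fin.cycleRange_of_gt h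
    have ht : (l:ℕ) < (t:ℕ) := h
    simp only [Function.comp_apply, hv, consOmit1]
    rw [if_neg (by omega)]
    congr 1
    rw [Fin.ext_iff]
    simp only [Fin.val_mk]
    split_ifs <;> omega

lemma omit2cons_eq_update {m : ℕ} (hm : 0 < m) (b c : L) (e : Fin (m+1) → L) (i j : Fin (m+1)) :
    omit2cons b e i j = Function.update (omit2cons c e i j) ⟨0, hm⟩ b := by
  funext t
  rcases eq_or_ne (t:ℕ) 0 with h | h
  · have : t = ⟨0,hm⟩ := Fin.ext h
    subst this
    simp [omit2cons, Function.update_self]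
  · rw [Function.update_of_ne (by simpa [Fin.ext_iff] using h)]
    simp [omit2cons, h]

lemma sum_antisymm {M : Type*} [AddCommGroup M] {n : ℕ} (F : Fin n → Fin n → M)
    (h : ∀ i j, i < j → F i j + F j i = 0) (hd : ∀ i, F i i = 0) :
    ∑ i : Fin n, ∑ j : Fin n, F i j = 0 := by
  have key : ∀ i j : Fin n, F i j = (if i < j then F i j else 0) + (if j < i then F i j else 0) := by
    intro i j
    rcases lt_trichotomy i j with h' | h' | h'
    · simp [h', asymm h']
    · subst h'; simp [hd, lt_irrefl]
    · simp [h', asymm h', not_lt_of_gt h']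
  have h2 : (∑ i : Fin n, ∑ j : Fin n, if j < i then F i j else 0)
      = -∑ i : Fin n, ∑ j : Fin n, (if i < j then F i j else 0) := by
    rw [Finset.sum_comm]
    rw [← Finset.sum_neg_distrib]
    refine Finset.sum_congr rfl fun x _ => ?_
    rw [← Finset.sum_neg_distrib]
    refine Finset.sum_congr rfl fun y _ => ?_
    split_ifs with hxy
    · exact eq_neg_of_add_eq_zero_left (by rw [add_comm]; exact h x y hxy)
    · simp
  calc ∑ i : Fin n, ∑ j : Fin n, F i j
      = (∑ i : Fin n, ∑ j : Fin n, if i < j then F i j else 0)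
        + (∑ i : Fin n, ∑ j : Fin n, if j < i then F i j else 0) := by
        rw [← Finset.sum_add_distrib]
        refine Finset.sum_congr rfl fun i _ => ?_
        rw [← Finset.sum_add_distrib]
        exact Finset.sum_congr rfl fun j _ => key i j
    _ = 0 := by rw [h2]; exact add_neg_cancel _

end auxlemmas

def auxT {A : Type*} [CommRing A] [Algebra ℝ A]
    {L : Type*} [LieRing L] [LieAlgebra ℝ L] [Module A L]
    {k m : ℕ}
    (α : AlternatingMap A L (AlternatingMap A (Derivation ℝ A A) A (Fin k)) (Fin m))
    (e : Fin (m + 1) → L) (Y : Fin k → Derivation ℝ A A)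
    (b : Fin (m + 1) → Fin (m + 1) → L) (i j : Fin (m + 1)) : A :=
  if i < j then (-(-1:ℤ)^((i:ℕ)+(j:ℕ))) • (α (omit2cons (b i j) e i j)) Y
  else if j < i then ((-1:ℤ)^((i:ℕ)+(j:ℕ))) • (α (omit2cons (b i j) e j i)) Y
  else 0

lemma auxT_diag {A : Type*} [CommRing A] [Algebra ℝ A]
    {L : Type*} [LieRing L] [LieAlgebra ℝ L] [Module A L]
    {k m : ℕ}
    (α : AlternatingMap A L (AlternatingMap A (Derivation ℝ A A) A (Fin k)) (Fin m))
    (e : Fin (m + 1) → L) (Y : Fin k → Derivation ℝ A A)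
    (b : Fin (m + 1) → Fin (m + 1) → L) (i : Fin (m + 1)) :
    auxT α e Y b i i = 0 := by
  simp [auxT]

lemma auxT_succAbove {A : Type*} [CommRing A] [Algebra ℝ A]
    {L : Type*} [LieRing L] [LieAlgebra ℝ L] [Module A L]
    {k m : ℕ}
    (α : AlternatingMap A L (AlternatingMap A (Derivation ℝ A A) A (Fin k)) (Fin m))
    (e : Fin (m + 1) → L) (Y : Fin k → Derivation ℝ A A)
    (b : Fin (m + 1) → Fin (m + 1) → L) (i : Fin (m + 1)) (l : Fin m) :
    auxT α e Y b i (i.succAbove l)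
      = ((-1:ℤ)^((i:ℕ)+(l:ℕ))) •
          (α (consOmit1 (b i (i.succAbove l)) (e ∘ i.succAbove) l)) Y := by
  rw [consOmit1_comp]
  rcases lt_or_ge (l:ℕ) (i:ℕ) with h | h
  · have hj : ((i.succAbove l : Fin (m+1)):ℕ) = (l:ℕ) := by rw [succAbove_coe, if_pos h]
    have h1 : i.succAbove l < i := by rw [Fin.lt_def, hj]; exact h
    have hfin : (⟨(l:ℕ), by omega⟩ : Fin (m+1)) = i.succAbove l := Fin.ext hj.symm
    rw [dif_pos h, hfin, auxT, if_neg (asymm h1), if_pos h1, hj]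
  · have hj : ((i.succAbove l : Fin (m+1)):ℕ) = (l:ℕ)+1 := by
      rw [succAbove_coe, if_neg (not_lt.2 h)]
    have h1 : i < i.succAbove l := by rw [Fin.lt_def, hj]; omega
    have hfin : (⟨(l:ℕ)+1, by have := l.isLt; omega⟩ : Fin (m+1)) = i.succAbove l :=
      Fin.ext hj.symm
    rw [dif_neg (not_lt.2 h), hfin, auxT, if_pos h1, hj]
    have hsc : (-(-1:ℤ)^((i:ℕ)+((l:ℕ)+1))) = (-1:ℤ)^((i:ℕ)+(l:ℕ)) := by
      have : (i:ℕ)+((l:ℕ)+1) = ((i:ℕ)+(l:ℕ))+1 := by omega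
      rw [this, pow_succ]; ring
    rw [hsc]

/-- (Form-valued equivariant forms vanish under `ᴱd` on the Lie kernel.)
Let `(A, L, ρ)` be a Lie–Rinehart algebra with connection `∇`, and let
`α : Lᵐ → Ω^k` (with `Ω^k` the alternating `A`-multilinear `k`-forms on `Der_ℝ(A)`,
carrying the Lie derivative action) be alternating, `A`-multilinear and equivariant.
If `Σ_{i<j} (−1)^{i+j} [eᵢ,e_j]^∇ ∧ e₁ ∧ … ∧ êᵢ ∧ … ∧ ê_j ∧ … ∧ e_{m+1} = 0` in the `m`-th
exterior power of `L`, then `(ᴱdα)(e₁,…,e_{m+1}) = 0` in `Ω^k`. -/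
theorem eDiffForm_eq_zero_of_equivariant_of_lieKernel
    {A : Type*} [CommRing A] [Algebra ℝ A]
    {L : Type*} [LieRing L] [LieAlgebra ℝ L] [Module A L]
    (ρ : L →ₗ[A] Derivation ℝ A A)
    (hanchor : ∀ e₁ e₂ : L, ρ ⁅e₁, e₂⁆ = ⁅ρ e₁, ρ e₂⁆)
    (hleibniz : ∀ (a : A) (e₁ e₂ : L), ⁅e₁, a • e₂⁆ = a • ⁅e₁, e₂⁆ + ρ e₁ a • e₂)
    (D : Derivation ℝ A A → L → L)
    (hDaddX : ∀ (X Y : Derivation ℝ A A) (e : L), D (X + Y) e = D X e + D Y e)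
    (hDsmulX : ∀ (a : A) (X : Derivation ℝ A A) (e : L), D (a • X) e = a • D X e)
    (hDadd : ∀ (X : Derivation ℝ A A) (e₁ e₂ : L), D X (e₁ + e₂) = D X e₁ + D X e₂)
    (hDsmulR : ∀ (X : Derivation ℝ A A) (r : ℝ) (e : L), D X (r • e) = r • D X e)
    (hDleibniz : ∀ (X : Derivation ℝ A A) (a : A) (e : L), D X (a • e) = a • D X e + X a • e)
    {k m : ℕ}
    (α : AlternatingMap A L (AlternatingMap A (Derivation ℝ A A) A (Fin k)) (Fin m))
    (hequiv : ∀ (e : L) (f : Fin m → L) (Y : Fin k → Derivation ℝ A A),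
      lieDer (ρ e) ⇑(α f) Y
          - ∑ i : Fin m, (α (Function.update f i (D (ρ e) (f i)))) Y
        = ∑ i : Fin m,
            (-1 : ℤ) ^ (i : ℕ) • (α (consOmit1 (covBracket ρ D e (f i)) f i)) Y)
    (e : Fin (m + 1) → L)
    (hker : (∑ i : Fin (m + 1), ∑ j : Fin (m + 1),
        if i < j then
          (-1 : ℤ) ^ ((i : ℕ) + (j : ℕ)) •
            ExteriorAlgebra.ιMulti A m (omit2cons (covBracket ρ D (e i) (e j)) e i j)
        else 0) = 0) :
    ∀ Y : Fin k → Derivation ℝ A A,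
      (∑ i : Fin (m + 1), (-1 : ℤ) ^ (i : ℕ) • lieDer (ρ (e i)) ⇑(α (e ∘ i.succAbove)) Y)
        + (∑ i : Fin (m + 1), ∑ j : Fin (m + 1),
            if i < j then
              (-1 : ℤ) ^ ((i : ℕ) + (j : ℕ)) • (α (omit2cons ⁅e i, e j⁆ e i j)) Y
            else 0)
      = 0 := by
  intro Y
  classical
  -- Step 1: evaluate `hker` through the lift of `α` to the exterior algebra.
  have hK : (∑ i : Fin (m+1), ∑ j : Fin (m+1),
      if i < j then ((-1:ℤ) ^ ((i:ℕ)+(j:ℕ))) •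
        ((α (omit2cons (covBracket ρ D (e i) (e j)) e i j)) Y) else 0) = 0 := by
    let N := AlternatingMap A (Derivation ℝ A A) A (Fin k)
    let F : ExteriorAlgebra A L →ₗ[A] N :=
      ExteriorAlgebra.liftAlternating
        (Function.update (fun i => (0 : AlternatingMap A L N (Fin i))) m α)
    have evadd : ∀ β γ : N, (β + γ) Y = β Y + γ Y := fun _ _ => rfl
    let ev : N →+ A := AddMonoidHom.mk' (fun β => β Y) evadd
    have hFι : ∀ v : Fin m → L, F (ExteriorAlgebra.ιMulti A m v) = α v := by
      intro v
      show ExteriorAlgebra.liftAlternating _ (ExteriorAlgebra.ιMulti A m v) = α v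
      rw [ExteriorAlgebra.liftAlternating_apply_ιMulti]
      simp
    set G : ExteriorAlgebra A L →+ A := ev.comp F.toAddMonoidHom with hG
    have h1 := congrArg G hker
    rw [map_zero, map_sum] at h1
    simp only [map_sum] at h1
    have h2 : ∀ i j : Fin (m+1), G (if i < j then ((-1:ℤ)^((i:ℕ)+(j:ℕ))) •
          ExteriorAlgebra.ιMulti A m (omit2cons (covBracket ρ D (e i) (e j)) e i j) else 0)
        = (if i < j then ((-1:ℤ)^((i:ℕ)+(j:ℕ))) •
            ((α (omit2cons (covBracket ρ D (e i) (e j)) e i j)) Y) else 0) := by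
      intro i j
      split_ifs with h
      · rw [map_zsmul]
        congr 1
        show ev (F _) = _
        rw [hFι]
        rfl
      · exact map_zero G
    simp only [h2] at h1
    exact h1
  -- Step 2: the permutation identity.
  have hperm : ∀ (f : Fin m → L) (l : Fin m) (b : L),
      (α (Function.update f l b)) Y = ((-1:ℤ)^(l:ℕ)) • (α (consOmit1 b f l)) Y := by
    intro f l b
    rw [update_eq_consOmit1, AlternatingMap.map_perm]
    simp [Fin.sign_cycleRange, Units.smul_def]
  -- Step 3: rewrite the Lie-derivative sum via equivariance.
  have hS1 : ∀ i : Fin (m+1),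
      (-1:ℤ)^(i:ℕ) • lieDer (ρ (e i)) ⇑(α (e ∘ i.succAbove)) Y
        = ∑ j : Fin (m+1),
            (auxT α e Y (fun i j => D (ρ (e i)) (e j)) i j
              + auxT α e Y (fun i j => covBracket ρ D (e i) (e j)) i j) := by
    intro i
    have he := hequiv (e i) (e ∘ i.succAbove) Y
    have hlie := sub_eq_iff_eq_add.mp he
    rw [hlie, smul_add, Finset.smul_sum, Finset.smul_sum]
    have hterm : ∀ l : Fin m,
        ((-1:ℤ)^(i:ℕ) •
            ((-1:ℤ)^(l:ℕ) • (α (consOmit1 (covBracket ρ D (e i) ((e ∘ i.succAbove) l))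
              (e ∘ i.succAbove) l)) Y))
          + ((-1:ℤ)^(i:ℕ) • (α (Function.update (e ∘ i.succAbove) l
              (D (ρ (e i)) ((e ∘ i.succAbove) l)))) Y)
        = auxT α e Y (fun i j => D (ρ (e i)) (e j)) i (i.succAbove l)
            + auxT α e Y (fun i j => covBracket ρ D (e i) (e j)) i (i.succAbove l) := by
      intro l
      rw [hperm, auxT_succAbove, auxT_succAbove, smul_smul, smul_smul, ← pow_add]
      exact add_comm _ _
    rw [← Finset.sum_add_distrib]
    calc (∑ l : Fin m,
          (((-1:ℤ)^(i:ℕ) •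
            ((-1:ℤ)^(l:ℕ) • (α (consOmit1 (covBracket ρ D (e i) ((e ∘ i.succAbove) l))
              (e ∘ i.succAbove) l)) Y))
          + ((-1:ℤ)^(i:ℕ) • (α (Function.update (e ∘ i.succAbove) l
              (D (ρ (e i)) ((e ∘ i.succAbove) l)))) Y)))
        = ∑ l : Fin m,
            (auxT α e Y (fun i j => D (ρ (e i)) (e j)) i (i.succAbove l)
              + auxT α e Y (fun i j => covBracket ρ D (e i) (e j)) i (i.succAbove l)) :=
          Finset.sum_congr rfl fun l _ => hterm l
      _ = ∑ j : Fin (m+1),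
            (auxT α e Y (fun i j => D (ρ (e i)) (e j)) i j
              + auxT α e Y (fun i j => covBracket ρ D (e i) (e j)) i j) := by
          rw [Fin.sum_univ_succAbove (fun j =>
            auxT α e Y (fun i j => D (ρ (e i)) (e j)) i j
              + auxT α e Y (fun i j => covBracket ρ D (e i) (e j)) i j) i]
          rw [auxT_diag, auxT_diag, add_zero, zero_add]
  -- Step 4: the big antisymmetric double sum vanishes.
  have hzero : ∑ i : Fin (m+1), ∑ j : Fin (m+1),
      ((auxT α e Y (fun i j => D (ρ (e i)) (e j)) i j
          + auxT α e Y (fun i j => covBracket ρ D (e i) (e j)) i j)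
        + (if i < j then ((-1:ℤ)^((i:ℕ)+(j:ℕ))) • (α (omit2cons ⁅e i, e j⁆ e i j)) Y else 0)
        + (if i < j then ((-1:ℤ)^((i:ℕ)+(j:ℕ))) •
            ((α (omit2cons (covBracket ρ D (e i) (e j)) e i j)) Y) else 0)) = 0 := by
    refine sum_antisymm _ ?_ ?_
    · intro i j hij
      have hji := Fin.lt_def.mp hij
      have hm : 0 < m := by have := j.isLt; omega
      have hD_ij : auxT α e Y (fun i j => D (ρ (e i)) (e j)) i j
          = (-(-1:ℤ)^((i:ℕ)+(j:ℕ))) • (α (omit2cons (D (ρ (e i)) (e j)) e i j)) Y := by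
        rw [auxT, if_pos hij]
      have hC_ij : auxT α e Y (fun i j => covBracket ρ D (e i) (e j)) i j
          = (-(-1:ℤ)^((i:ℕ)+(j:ℕ))) •
              (α (omit2cons (covBracket ρ D (e i) (e j)) e i j)) Y := by
        rw [auxT, if_pos hij]
      have hD_ji : auxT α e Y (fun i j => D (ρ (e i)) (e j)) j i
          = ((-1:ℤ)^((j:ℕ)+(i:ℕ))) • (α (omit2cons (D (ρ (e j)) (e i)) e i j)) Y := by
        rw [auxT, if_neg (asymm hij), if_pos hij]
      have hC_ji : auxT α e Y (fun i j => covBracket ρ D (e i) (e j)) j i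
          = ((-1:ℤ)^((j:ℕ)+(i:ℕ))) •
              (α (omit2cons (covBracket ρ D (e j) (e i)) e i j)) Y := by
        rw [auxT, if_neg (asymm hij), if_pos hij]
      have hlieval : (α (omit2cons ⁅e i, e j⁆ e i j)) Y
          = (α (omit2cons (covBracket ρ D (e i) (e j)) e i j)) Y
            + (α (omit2cons (D (ρ (e i)) (e j)) e i j)) Y
            - (α (omit2cons (D (ρ (e j)) (e i)) e i j)) Y := by
        have hdec : ⁅e i, e j⁆
            = (covBracket ρ D (e i) (e j) + D (ρ (e i)) (e j)) - D (ρ (e j)) (e i) := by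
          unfold covBracket; abel
        rw [hdec, omit2cons_eq_update hm _ (0:L) e i j,
          AlternatingMap.map_update_sub, AlternatingMap.map_update_add,
          ← omit2cons_eq_update hm, ← omit2cons_eq_update hm, ← omit2cons_eq_update hm]
        simp
      have hskew : (α (omit2cons (covBracket ρ D (e j) (e i)) e i j)) Y
          = -((α (omit2cons (covBracket ρ D (e i) (e j)) e i j)) Y) := by
        have hcb : covBracket ρ D (e j) (e i) = -covBracket ρ D (e i) (e j) := by
          unfold covBracket
          rw [← lie_skew (e i) (e j)]
          abel
        rw [hcb, omit2cons_eq_update hm _ (0:L) e i j, AlternatingMap.map_update_neg,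
          ← omit2cons_eq_update hm]
        simp
      have hcomm : (j:ℕ)+(i:ℕ) = (i:ℕ)+(j:ℕ) := Nat.add_comm _ _
      rw [hD_ij, hC_ij, hD_ji, hC_ji, if_pos hij, if_pos hij,
        if_neg (asymm hij), if_neg (asymm hij), hlieval, hskew, hcomm]
      simp only [zsmul_eq_mul]
      push_cast
      ring
    · intro i
      simp [auxT_diag]
  -- Step 5: assemble.
  have hsum1 : (∑ i : Fin (m+1), (-1:ℤ)^(i:ℕ) • lieDer (ρ (e i)) ⇑(α (e ∘ i.succAbove)) Y)
      = ∑ i : Fin (m+1), ∑ j : Fin (m+1),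
          (auxT α e Y (fun i j => D (ρ (e i)) (e j)) i j
            + auxT α e Y (fun i j => covBracket ρ D (e i) (e j)) i j) :=
    Finset.sum_congr rfl fun i _ => hS1 i
  have hsplit : (∑ i : Fin (m+1), ∑ j : Fin (m+1),
        (auxT α e Y (fun i j => D (ρ (e i)) (e j)) i j
          + auxT α e Y (fun i j => covBracket ρ D (e i) (e j)) i j))
      + (∑ i : Fin (m+1), ∑ j : Fin (m+1),
          if i < j then ((-1:ℤ)^((i:ℕ)+(j:ℕ))) • (α (omit2cons ⁅e i, e j⁆ e i j)) Y else 0)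
      + (∑ i : Fin (m+1), ∑ j : Fin (m+1),
          if i < j then ((-1:ℤ)^((i:ℕ)+(j:ℕ))) •
            ((α (omit2cons (covBracket ρ D (e i) (e j)) e i j)) Y) else 0)
      = ∑ i : Fin (m+1), ∑ j : Fin (m+1),
          ((auxT α e Y (fun i j => D (ρ (e i)) (e j)) i j
              + auxT α e Y (fun i j => covBracket ρ D (e i) (e j)) i j)
            + (if i < j then ((-1:ℤ)^((i:ℕ)+(j:ℕ))) • (α (omit2cons ⁅e i, e j⁆ e i j)) Y else 0)
            + (if i < j then ((-1:ℤ)^((i:ℕ)+(j:ℕ))) •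
                ((α (omit2cons (covBracket ρ D (e i) (e j)) e i j)) Y) else 0)) := by
    rw [← Finset.sum_add_distrib, ← Finset.sum_add_distrib]
    refine Finset.sum_congr rfl fun i _ => ?_
    rw [← Finset.sum_add_distrib, ← Finset.sum_add_distrib]
  rw [hsum1]
  have hfinal := hsplit.trans hzero
  rw [hK, add_zero] at hfinal
  exact hfinal
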